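/- Let u : (-∞,0) → ℝ be a convex, continuous, strictly increasing bijection from (-∞,0) onto ℝ, with inverse u⁻¹ : ℝ → (-∞,0), and define the radial weight φ(z) = u(log|z|²) on the punctured unit disc. Then for every function f : ℂ → ℂ holomorphic on the open unit disc Δ with f(0) = 1, one has, as an inequality of Lebesgue integrals with values in [0,+∞], ∫_{Δ} |f(z)|² e^{-φ(z)} dλ(z) ≥ ∫_{|w|<1} e^{u⁻¹(-log|w|²)} dλ(w). That is, the weighted L²-norm of any holomorphic extension of the value 1 at the origin is bounded below by the quantity ∫_{|w|<1} e^{-ψ(w)} dλ(w), where ψ(w) = -u⁻¹(-log|w|²). -/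

import Mathlib

open MeasureTheory Set Real Metric
open scoped ENNReal

/-!
Since `u` increases on `(-∞, 0)` with inverse `v`, for `0 < |z|, |w| < 1` one has
`|w|² < e^{-φ(z)}` iff `|z|² < e^{-ψ(w)}`. Slicing the region `{(w, z) : |z|² < e^{-ψ(w)}}` of
the punctured bidisc in both directions therefore gives `π ∫ e^{-ψ} ≤ π ∫ e^{-φ}`. The same
equivalence, with a level `τ` in place of `|w|²`, shows that the superlevel sets of `e^{-φ}` are
discs centred at `0`. On such a disc `|f(0)|² · area ≤ ∫ |f|²` by the mean value property of `f²`
on circles, and integrating over the levels (layer cake) gives `|f(0)|² ∫ e^{-φ} ≤ ∫ |f|² e^{-φ}`.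
-/

theorem Real.circleAverage_eq_setIntegral_Ioo {E : Type*} [NormedAddCommGroup E] [NormedSpace ℝ E]
    (g : ℂ → E) (c : ℂ) (R : ℝ) :
    circleAverage g c R = (2 * π)⁻¹ • ∫ θ in Ioo (-π) π, g (circleMap c R θ) := by
  rw [circleAverage_eq_integral_add (-π), intervalIntegral.integral_comp_add_right
    (fun θ ↦ g (circleMap c R θ)), zero_add, show 2 * π + -π = π by ring,
    intervalIntegral.integral_of_le (by linarith [pi_pos]), integral_Ioc_eq_integral_Ioo]

theorem ofReal_two_pi_mul_sq_norm_le_lintegral_circle {f : ℂ → ℂ} {ρ : ℝ}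
    (hf : DiffContOnCl ℂ f (ball 0 |ρ|)) :
    ENNReal.ofReal (2 * π * ‖f 0‖ ^ 2)
      ≤ ∫⁻ θ in Ioo (-π) π, ENNReal.ofReal (‖f (circleMap 0 ρ θ)‖ ^ 2) := by
  have hmean : (2 * π : ℂ) * f 0 ^ 2 = ∫ θ in Ioo (-π) π, f (circleMap 0 ρ θ) ^ 2 := by
    have hsq : DiffContOnCl ℂ (fun z ↦ f z ^ 2) (ball 0 |ρ|) := by
      simpa only [sq, smul_eq_mul] using hf.smul hf
    rw [← hsq.circleAverage, circleAverage_eq_setIntegral_Ioo, Complex.real_smul]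
    push_cast
    field_simp
  calc ENNReal.ofReal (2 * π * ‖f 0‖ ^ 2) = ‖(2 * π : ℂ) * f 0 ^ 2‖ₑ := by
        rw [← ofReal_norm]; simp [abs_of_pos pi_pos]
    _ ≤ ∫⁻ θ in Ioo (-π) π, ‖f (circleMap 0 ρ θ) ^ 2‖ₑ :=
        hmean ▸ enorm_integral_le_lintegral_enorm _
    _ = _ := by simp_rw [← ofReal_norm, norm_pow]

theorem Complex.polarCoord_symm_eq_circleMap (p : ℝ × ℝ) :
    Complex.polarCoord.symm p = circleMap 0 p.1 p.2 := by
  simp [circleMap, Complex.exp_mul_I, Complex.polarCoord_symm_apply]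

theorem lintegral_le_lintegral_of_forall_lintegral_circle_le {g₁ g₂ : ℂ → ℝ≥0∞}
    (hg₂ : Measurable g₂)
    (h : ∀ ρ > 0, ∫⁻ θ in Ioo (-π) π, g₁ (circleMap 0 ρ θ)
      ≤ ∫⁻ θ in Ioo (-π) π, g₂ (circleMap 0 ρ θ)) :
    ∫⁻ z, g₁ z ≤ ∫⁻ z, g₂ z := by
  simp only [← Complex.lintegral_comp_polarCoord_symm, polarCoord_target,
    Complex.polarCoord_symm_eq_circleMap, Measure.volume_eq_prod, ← Measure.prod_restrict]
  have hcirc : Continuous fun p : ℝ × ℝ ↦ circleMap 0 p.1 p.2 := by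
    simp only [circleMap]; fun_prop
  have hmeas : Measurable fun p : ℝ × ℝ ↦ ENNReal.ofReal p.1 • g₂ (circleMap 0 p.1 p.2) :=
    measurable_fst.ennreal_ofReal.smul (hg₂.comp hcirc.measurable)
  rw [lintegral_prod _ hmeas.aemeasurable]
  refine (lintegral_prod_le _).trans (setLIntegral_mono' measurableSet_Ioi fun ρ hρ ↦ ?_)
  simp only [smul_eq_mul, lintegral_const_mul' _ _ ENNReal.ofReal_ne_top]
  exact mul_le_mul_right (h ρ hρ) _

theorem ofReal_sq_norm_mul_volume_ball_le {f : ℂ → ℂ} {r : ℝ}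
    (hf : DifferentiableOn ℂ f (ball 0 r)) :
    ENNReal.ofReal (‖f 0‖ ^ 2) * volume (ball (0 : ℂ) r)
      ≤ ∫⁻ z in ball (0 : ℂ) r, ENNReal.ofReal (‖f z‖ ^ 2) := by
  classical
  have hmeas : Measurable ((ball (0 : ℂ) r).indicator fun z ↦ ENNReal.ofReal (‖f z‖ ^ 2)) := by
    rw [← piecewise_eq_indicator]
    exact (ENNReal.continuous_ofReal.comp_continuousOn (hf.continuousOn.norm.pow 2))
      |>.measurable_piecewise continuousOn_const measurableSet_ball
  rw [← setLIntegral_const, ← lintegral_indicator measurableSet_ball,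
    ← lintegral_indicator measurableSet_ball]
  refine lintegral_le_lintegral_of_forall_lintegral_circle_le hmeas fun ρ hρ ↦ ?_
  have hmem : ∀ θ, circleMap 0 ρ θ ∈ ball (0 : ℂ) r ↔ ρ < r := by
    simp [abs_of_pos hρ]
  by_cases hρr : ρ < r
  · simp only [indicator_of_mem ((hmem _).2 hρr), setLIntegral_const, Real.volume_Ioo]
    calc ENNReal.ofReal (‖f 0‖ ^ 2) * ENNReal.ofReal (π - -π)
        = ENNReal.ofReal (2 * π * ‖f 0‖ ^ 2) := by
          rw [← ENNReal.ofReal_mul (by positivity)]; ring_nf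
      _ ≤ _ := ofReal_two_pi_mul_sq_norm_le_lintegral_circle
          (hf.diffContOnCl_ball (by simpa [abs_of_pos hρ] using closedBall_subset_ball hρr))
  · simp [indicator_of_notMem (mt (hmem _).1 hρr)]

theorem StrictMonoOn.strictMono_of_leftInverse {α β : Type*} [LinearOrder α] [Preorder β]
    {f : α → β} {g : β → α} {s : Set α} (hf : StrictMonoOn f s)
    (hg : ∀ x, g x ∈ s) (hfg : Function.LeftInverse f g) : StrictMono g := fun a b hab ↦
  (hf.lt_iff_lt (hg a) (hg b)).1 (by rwa [hfg a, hfg b])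

theorem lt_exp_inv_iff_lt_exp_neg {u v : ℝ → ℝ} (hmono : StrictMonoOn u (Iio 0))
    (hv_mem : ∀ s, v s ∈ Iio 0) (hv_right : ∀ s, u (v s) = s) {x τ : ℝ} (hx₀ : 0 < x)
    (hx₁ : x < 1) (hτ : 0 < τ) :
    x < exp (v (-log τ)) ↔ τ < exp (-u (log x)) := by
  rw [← log_lt_iff_lt_exp hx₀, ← log_lt_iff_lt_exp hτ, lt_neg,
    ← hmono.lt_iff_lt (log_neg hx₀ hx₁) (hv_mem _), hv_right]

theorem setOf_sq_norm_lt_eq_ball {c : ℝ} :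
    {z : ℂ | ‖z‖ ^ 2 < c} = ball 0 (√c) := by
  ext z; simp [lt_sqrt (norm_nonneg z)]

theorem volume_setOf_sq_norm_lt {c : ℝ} (hc : 0 ≤ c) :
    volume {z : ℂ | ‖z‖ ^ 2 < c} = ENNReal.ofReal c * ENNReal.ofReal π := by
  rw [setOf_sq_norm_lt_eq_ball, Complex.volume_ball, ← ENNReal.ofReal_pow (sqrt_nonneg c),
    sq_sqrt hc, ← NNReal.coe_real_pi, ENNReal.ofReal_coe_nnreal]

theorem mem_ball_diff_zero_iff {z : ℂ} : z ∈ ball (0 : ℂ) 1 \ {0} ↔ ‖z‖ ^ 2 ∈ Ioo 0 1 := by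
  simp [sq_lt_one_iff₀ (norm_nonneg z), and_comm, sq_pos_iff]

theorem volume_restrict_ball_diff_zero (r : ℝ) :
    volume.restrict (ball (0 : ℂ) r \ {0}) = volume.restrict (ball 0 r) :=
  Measure.restrict_congr_set (sdiff_null_ae_eq_self (measure_singleton 0))

theorem lintegral_measure_prodMk_left_le {α β : Type*} [MeasurableSpace α] [MeasurableSpace β]
    {μ ν : Measure α} {κ : Measure β} [SFinite μ] [SFinite ν] [SFinite κ] {S : Set (α × β)}
    (hS : MeasurableSet S) (h : ∀ y, μ ((·, y) ⁻¹' S) ≤ ν ((·, y) ⁻¹' S)) :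
    ∫⁻ x, κ (Prod.mk x ⁻¹' S) ∂μ ≤ ∫⁻ x, κ (Prod.mk x ⁻¹' S) ∂ν := by
  simp only [← Measure.prod_apply hS, Measure.prod_apply_symm hS]
  exact lintegral_mono h

theorem lintegral_exp_inv_le_lintegral_exp_neg {u v : ℝ → ℝ} (hmono : StrictMonoOn u (Iio 0))
    (hv_mem : ∀ s, v s ∈ Iio 0) (hv_right : ∀ s, u (v s) = s) :
    ∫⁻ w in ball (0 : ℂ) 1, ENNReal.ofReal (exp (v (-log (‖w‖ ^ 2))))
      ≤ ∫⁻ z in ball (0 : ℂ) 1, ENNReal.ofReal (exp (-u (log (‖z‖ ^ 2)))) := by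
  have hv : Measurable v := (hmono.strictMono_of_leftInverse hv_mem hv_right).monotone.measurable
  set D := ball (0 : ℂ) 1 \ {0}
  have hD : MeasurableSet D := measurableSet_ball.diff (measurableSet_singleton 0)
  set S : Set (ℂ × ℂ) := {p | ‖p.2‖ ^ 2 < exp (v (-log (‖p.1‖ ^ 2)))}
  have hS : MeasurableSet S := measurableSet_lt (by fun_prop) (by fun_prop)
  have slice_left : ∀ w, ENNReal.ofReal (exp (v (-log (‖w‖ ^ 2)))) * ENNReal.ofReal π
      ≤ volume.restrict D (Prod.mk w ⁻¹' S) := by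
    intro w
    have hsub : Prod.mk w ⁻¹' S \ {0} ⊆ Prod.mk w ⁻¹' S ∩ D := by
      rintro z ⟨hz, hz₀⟩
      refine ⟨hz, mem_ball_diff_zero_iff.2 ⟨pow_pos (norm_pos_iff.2 hz₀) 2, hz.trans ?_⟩⟩
      exact exp_lt_one_iff.2 (hv_mem _)
    calc _ = volume (Prod.mk w ⁻¹' S) := (volume_setOf_sq_norm_lt (exp_pos _).le).symm
      _ = volume (Prod.mk w ⁻¹' S \ {0}) := (measure_sdiff_null (measure_singleton 0)).symm
      _ ≤ _ := (measure_mono hsub).trans_eq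
        (Measure.restrict_apply (measurable_prodMk_left hS)).symm
  have slice_right : ∀ z ∈ D, volume.restrict D ((·, z) ⁻¹' S)
      ≤ ENNReal.ofReal (exp (-u (log (‖z‖ ^ 2)))) * ENNReal.ofReal π := by
    intro z hz
    obtain ⟨hz₀, hz₁⟩ := mem_ball_diff_zero_iff.1 hz
    rw [Measure.restrict_apply' hD, ← volume_setOf_sq_norm_lt (exp_pos _).le]
    refine measure_mono fun w ⟨hw, hwD⟩ ↦ ?_
    exact (lt_exp_inv_iff_lt_exp_neg hmono hv_mem hv_right hz₀ hz₁
      (mem_ball_diff_zero_iff.1 hwD).1).1 hw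
  rw [← volume_restrict_ball_diff_zero,
    ← ENNReal.mul_le_mul_iff_left (ENNReal.ofReal_pos.2 pi_pos).ne' ENNReal.ofReal_ne_top,
    ← lintegral_mul_const' _ _ ENNReal.ofReal_ne_top,
    ← lintegral_mul_const' _ _ ENNReal.ofReal_ne_top]
  calc _ ≤ ∫⁻ w, volume.restrict D (Prod.mk w ⁻¹' S) ∂volume.restrict D := lintegral_mono slice_left
    _ = ∫⁻ z, volume.restrict D ((·, z) ⁻¹' S) ∂volume.restrict D := by
      rw [← Measure.prod_apply hS, Measure.prod_apply_symm hS]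
    _ ≤ _ := setLIntegral_mono' hD slice_right

theorem ofReal_sq_norm_mul_lintegral_exp_neg_le {u v : ℝ → ℝ} (hmono : StrictMonoOn u (Iio 0))
    (hv_mem : ∀ s, v s ∈ Iio 0) (hv_right : ∀ s, u (v s) = s) {f : ℂ → ℂ}
    (hf : DifferentiableOn ℂ f (ball 0 1)) :
    ENNReal.ofReal (‖f 0‖ ^ 2) * ∫⁻ z in ball (0 : ℂ) 1, ENNReal.ofReal (exp (-u (log (‖z‖ ^ 2))))
      ≤ ∫⁻ z in ball (0 : ℂ) 1, ENNReal.ofReal (‖f z‖ ^ 2 * exp (-u (log (‖z‖ ^ 2)))) := by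
  have hv : Measurable v := (hmono.strictMono_of_leftInverse hv_mem hv_right).monotone.measurable
  set D := ball (0 : ℂ) 1 \ {0}
  have hD : MeasurableSet D := measurableSet_ball.diff (measurableSet_singleton 0)
  set F : ℂ → ℝ≥0∞ := fun z ↦ ENNReal.ofReal (‖f z‖ ^ 2)
  have hF : AEMeasurable F (volume.restrict D) :=
    ((ENNReal.continuous_ofReal.comp_continuousOn (hf.continuousOn.norm.pow 2)).mono
      sdiff_subset).aemeasurable hD
  -- the region under the graph of `e^{-φ}`, written through `v` because `u` need not be measurable
  set T : Set (ℂ × ℝ) := {q | 0 < q.2} ∩ {q | ‖q.1‖ ^ 2 < exp (v (-log q.2))}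
  have hT : MeasurableSet T :=
    (measurableSet_lt measurable_const measurable_snd).inter
      (measurableSet_lt (by fun_prop) (by fun_prop))
  have slice_left :
      ∀ z ∈ D, volume (Prod.mk z ⁻¹' T) = ENNReal.ofReal (exp (-u (log (‖z‖ ^ 2)))) := by
    intro z hz
    obtain ⟨hz₀, hz₁⟩ := mem_ball_diff_zero_iff.1 hz
    have : Prod.mk z ⁻¹' T = Ioo 0 (exp (-u (log (‖z‖ ^ 2)))) := by
      ext τ
      simp only [T, mem_preimage, mem_inter_iff, mem_ofPred_eq, mem_Ioo, and_congr_right_iff]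
      exact lt_exp_inv_iff_lt_exp_neg hmono hv_mem hv_right hz₀ hz₁
    rw [this, Real.volume_Ioo, sub_zero]
  have slice_right : ∀ τ, (ENNReal.ofReal (‖f 0‖ ^ 2) • volume.restrict D) ((·, τ) ⁻¹' T)
      ≤ (volume.restrict D).withDensity F ((·, τ) ⁻¹' T) := by
    intro τ
    by_cases hτ : 0 < τ
    · have hball : (·, τ) ⁻¹' T = ball (0 : ℂ) (√(exp (v (-log τ)))) := by
        simp only [T, preimage_inter, preimage_ofPred_eq, hτ, ofPred_true, univ_inter,
          setOf_sq_norm_lt_eq_ball]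
      have hsub : ball (0 : ℂ) (√(exp (v (-log τ)))) ⊆ ball 0 1 :=
        ball_subset_ball (sqrt_le_one.2 (exp_lt_one_iff.2 (hv_mem _)).le)
      rw [hball, withDensity_apply _ measurableSet_ball, Measure.smul_apply, smul_eq_mul,
        volume_restrict_ball_diff_zero, Measure.restrict_apply measurableSet_ball,
        Measure.restrict_restrict measurableSet_ball, inter_eq_left.2 hsub]
      exact ofReal_sq_norm_mul_volume_ball_le (hf.mono hsub)
    · simp [T, hτ]
  rw [← volume_restrict_ball_diff_zero]
  calc _ = ENNReal.ofReal (‖f 0‖ ^ 2) * ∫⁻ z, volume (Prod.mk z ⁻¹' T) ∂volume.restrict D := by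
        rw [setLIntegral_congr_fun hD slice_left]
    _ = ∫⁻ z, volume (Prod.mk z ⁻¹' T) ∂(ENNReal.ofReal (‖f 0‖ ^ 2) • volume.restrict D) :=
        by rw [lintegral_smul_measure, smul_eq_mul]
    _ ≤ ∫⁻ z, volume (Prod.mk z ⁻¹' T) ∂(volume.restrict D).withDensity F :=
        lintegral_measure_prodMk_left_le hT slice_right
    _ = ∫⁻ z, F z * volume (Prod.mk z ⁻¹' T) ∂volume.restrict D :=
        lintegral_withDensity_eq_lintegral_mul₀ hF (measurable_measure_prodMk_left hT).aemeasurable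
    _ = _ := setLIntegral_congr_fun hD fun z hz ↦ by
        rw [slice_left z hz, ENNReal.ofReal_mul (sq_nonneg _)]

theorem radial_extension_lower_bound_general
    (u v : ℝ → ℝ)
    (hmono : StrictMonoOn u (Set.Iio (0 : ℝ)))
    (hv_mem : ∀ s : ℝ, v s ∈ Set.Iio (0 : ℝ))
    (hv_right : ∀ s : ℝ, u (v s) = s)
    (f : ℂ → ℂ) (hf : ∀ z ∈ Metric.ball (0 : ℂ) 1, DifferentiableAt ℂ f z)
    (hf0 : f 0 = 1) :
    ∫⁻ w in Metric.ball (0 : ℂ) 1,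
        ENNReal.ofReal (Real.exp (v (-(Real.log (‖w‖ ^ 2)))))
      ≤ ∫⁻ z in Metric.ball (0 : ℂ) 1,
          ENNReal.ofReal (‖f z‖ ^ 2 *
            Real.exp (-(u (Real.log (‖z‖ ^ 2))))) :=
  calc _ ≤ ∫⁻ z in ball (0 : ℂ) 1, ENNReal.ofReal (exp (-u (log (‖z‖ ^ 2)))) :=
        lintegral_exp_inv_le_lintegral_exp_neg hmono hv_mem hv_right
    _ = ENNReal.ofReal (‖f 0‖ ^ 2)
          * ∫⁻ z in ball (0 : ℂ) 1, ENNReal.ofReal (exp (-u (log (‖z‖ ^ 2)))) := by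
        simp [hf0]
    _ ≤ _ := ofReal_sq_norm_mul_lintegral_exp_neg_le hmono hv_mem hv_right
        fun z hz ↦ (hf z hz).differentiableWithinAt

/-- For a convex, continuous, strictly increasing bijection
`u : (-∞,0) → ℝ` with inverse `v : ℝ → (-∞,0)`, the radial weight
`φ(z) = u(log|z|²)`, and any `f` holomorphic on the unit disc with `f 0 = 1`,
`∫_Δ |f|² e^{-φ} dλ ≥ ∫_{|w|<1} e^{v(-log|w|²)} dλ(w)` in `[0,∞]`. -/
theorem radial_extension_lower_bound
    (u v : ℝ → ℝ)
    (hconv : ConvexOn ℝ (Set.Iio (0 : ℝ)) u)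
    (hcont : ContinuousOn u (Set.Iio (0 : ℝ)))
    (hmono : StrictMonoOn u (Set.Iio (0 : ℝ)))
    (hsurj : u '' Set.Iio (0 : ℝ) = Set.univ)
    (hv_mem : ∀ s : ℝ, v s ∈ Set.Iio (0 : ℝ))
    (hv_right : ∀ s : ℝ, u (v s) = s)
    (hv_left : ∀ t ∈ Set.Iio (0 : ℝ), v (u t) = t)
    (f : ℂ → ℂ) (hf : ∀ z ∈ Metric.ball (0 : ℂ) 1, DifferentiableAt ℂ f z)
    (hf0 : f 0 = 1) :
    ∫⁻ w in Metric.ball (0 : ℂ) 1,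
        ENNReal.ofReal (Real.exp (v (-(Real.log (‖w‖ ^ 2)))))
      ≤ ∫⁻ z in Metric.ball (0 : ℂ) 1,
          ENNReal.ofReal (‖f z‖ ^ 2 *
            Real.exp (-(u (Real.log (‖z‖ ^ 2))))) :=
  radial_extension_lower_bound_general u v hmono hv_mem hv_right f hf hf0
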